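/- arXiv:1705.00694 — 3 statements merged into one kernel-verified Lean document; each statement's English description precedes it below -/
import Mathlib

section
/- The number of transitive irreflexive relations R on the disjoint union of three linearly ordered chains of sizes d₁, d₂, d₃ ≤ d, such that R extends the three chain orders and is 'upward closed across chains' (if x from one chain relates to y in another chain then x relates to every element above y in that chain), is at most 2^{12d}. -/
/-- The vertex set: a disjoint union of three chains. -/
abbrev ProfileVertex (d₁ d₂ d₃ : ℕ) := Fin d₁ ⊕ Fin d₂ ⊕ Fin d₃

/-- Index of the chain a vertex belongs to. -/
def chainIdx {d₁ d₂ d₃ : ℕ} : ProfileVertex d₁ d₂ d₃ → ℕ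
  | .inl _ => 0
  | .inr (.inl _) => 1
  | .inr (.inr _) => 2

/-- Height of a vertex inside its chain. -/
def chainHt {d₁ d₂ d₃ : ℕ} : ProfileVertex d₁ d₂ d₃ → ℕ
  | .inl x => x
  | .inr (.inl x) => x
  | .inr (.inr x) => x

/-!
Within one chain, irreflexivity and transitivity force a profile `R` to be the chain order.
Between chains `i ≠ j`, the predicate `R x y` (`x` in chain `i`, `y` in chain `j`) is upward
closed in `y` and, by transitivity, downward closed in `x`, so it is recorded by the monotone
map sending `x` to the number of `y` with `¬ R x y`. A monotone `f : Fin a → Fin (b + 1)` is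
determined by the range of the strictly monotone `x ↦ x + f x : Fin a → Fin (a + b)`, so there
are at most `2 ^ (a + b) ≤ 2 ^ (2 d)` of them, and the six ordered pairs of chains give
`(2 ^ (2 d)) ^ 6`.
-/

open Finset

section Threshold

variable {b : ℕ}

open Classical in
noncomputable def threshold (p : Fin b → Prop) : Fin (b + 1) :=
  ⟨#{y | ¬ p y}, Nat.lt_succ_of_le ((card_filter_le _ _).trans (card_fin b).le)⟩

lemma threshold_le_iff {p : Fin b → Prop} (hp : Monotone p) (y : Fin b) :
    p y ↔ (threshold p : ℕ) ≤ y := by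
  classical
  simp only [threshold]
  constructor
  · intro hy
    have hsub : ({z | ¬ p z} : Finset (Fin b)) ⊆ Iio y := fun z hz => by
      simp only [mem_filter, mem_univ, true_and] at hz
      exact mem_Iio.2 (lt_of_not_ge fun hyz => hz (hp hyz hy))
    simpa using card_le_card hsub
  · intro hle
    by_contra hy
    have hsub : Iic y ⊆ ({z | ¬ p z} : Finset (Fin b)) := fun z hz => by
      simp only [mem_filter, mem_univ, true_and]
      exact fun hz' => hy (hp (mem_Iic.1 hz) hz')
    have := card_le_card hsub
    simp only [Fin.card_Iic] at this
    omega

lemma threshold_antitone : Antitone (threshold : (Fin b → Prop) → Fin (b + 1)) := by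
  classical
  intro p q hpq
  simp only [threshold, Fin.mk_le_mk]
  exact card_le_card fun y => by simpa using mt (hpq y)

end Threshold

section MonotoneCount

variable {a b : ℕ}

def monotoneShift (f : Fin a → Fin (b + 1)) : Fin a → Fin (a + b) :=
  fun x => ⟨x + f x, by omega⟩

lemma strictMono_monotoneShift {f : Fin a → Fin (b + 1)} (hf : Monotone f) :
    StrictMono (monotoneShift f) := fun x y hxy => by
  have := hf hxy.le
  simp only [monotoneShift, Fin.mk_lt_mk, Fin.le_iff_val_le_val] at this ⊢
  omega

lemma card_monotone_fin_le : Nat.card {f : Fin a → Fin (b + 1) // Monotone f} ≤ 2 ^ (a + b) := by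
  have hinj : Function.Injective fun f : {f : Fin a → Fin (b + 1) // Monotone f} =>
      Set.range (monotoneShift f.1) := by
    rintro ⟨f, hf⟩ ⟨g, hg⟩ h
    have hfg := ((strictMono_monotoneShift hf).range_inj (strictMono_monotoneShift hg)).1 h
    refine Subtype.ext (funext fun x => Fin.ext ?_)
    have := congrArg Fin.val (congrFun hfg x)
    simp only [monotoneShift] at this
    show (f x : ℕ) = g x
    omega
  simpa using Nat.card_le_card_of_injective _ hinj

end MonotoneCount

section Profile

variable {d₁ d₂ d₃ : ℕ}

def chainEmb : (i : Fin 3) → Fin (![d₁, d₂, d₃] i) → ProfileVertex d₁ d₂ d₃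
  | 0, x => .inl x
  | 1, x => .inr (.inl x)
  | 2, x => .inr (.inr x)

lemma exists_chainEmb_eq (v : ProfileVertex d₁ d₂ d₃) : ∃ i x, chainEmb i x = v := by
  rcases v with x | x | x
  exacts [⟨0, x, rfl⟩, ⟨1, x, rfl⟩, ⟨2, x, rfl⟩]

lemma chainIdx_chainEmb (i : Fin 3) (x : Fin (![d₁, d₂, d₃] i)) :
    chainIdx (chainEmb i x) = i := by
  fin_cases i <;> rfl

lemma chainHt_chainEmb (i : Fin 3) (x : Fin (![d₁, d₂, d₃] i)) : chainHt (chainEmb i x) = x := by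
  fin_cases i <;> rfl

def IsProfile (R : ProfileVertex d₁ d₂ d₃ → ProfileVertex d₁ d₂ d₃ → Prop) : Prop :=
  (∀ x, ¬ R x x) ∧
  (∀ x y z, R x y → R y z → R x z) ∧
  (∀ x y : Fin d₁, x < y → R (.inl x) (.inl y)) ∧
  (∀ x y : Fin d₂, x < y → R (.inr (.inl x)) (.inr (.inl y))) ∧
  (∀ x y : Fin d₃, x < y → R (.inr (.inr x)) (.inr (.inr y))) ∧
  (∀ x y y', chainIdx x ≠ chainIdx y → chainIdx y = chainIdx y' →
    chainHt y ≤ chainHt y' → R x y → R x y')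

noncomputable def crossThreshold (R : ProfileVertex d₁ d₂ d₃ → ProfileVertex d₁ d₂ d₃ → Prop)
    (i j : Fin 3) (x : Fin (![d₁, d₂, d₃] i)) : Fin (![d₁, d₂, d₃] j + 1) :=
  threshold fun y => R (chainEmb i x) (chainEmb j y)

namespace IsProfile

variable {R R' : ProfileVertex d₁ d₂ d₃ → ProfileVertex d₁ d₂ d₃ → Prop}

lemma rel_chainEmb_of_lt (hR : IsProfile R) (i : Fin 3) {x y : Fin (![d₁, d₂, d₃] i)}
    (hxy : x < y) : R (chainEmb i x) (chainEmb i y) := by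
  obtain ⟨-, -, h₁, h₂, h₃, -⟩ := hR
  revert x y
  fin_cases i
  exacts [h₁ _ _, h₂ _ _, h₃ _ _]

lemma rel_chainEmb_iff (hR : IsProfile R) (i : Fin 3) (x y : Fin (![d₁, d₂, d₃] i)) :
    R (chainEmb i x) (chainEmb i y) ↔ x < y := by
  refine ⟨fun h => lt_of_not_ge fun hyx => ?_, hR.rel_chainEmb_of_lt i⟩
  obtain rfl | hlt := hyx.eq_or_lt
  · exact hR.1 _ h
  · exact hR.1 _ (hR.2.1 _ _ _ h (hR.rel_chainEmb_of_lt i hlt))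

lemma antitone_rel_chainEmb (hR : IsProfile R) (i j : Fin 3) :
    Antitone fun x (y : Fin (![d₁, d₂, d₃] j)) => R (chainEmb i x) (chainEmb j y) := by
  intro x x' hxx y h
  obtain rfl | hlt := hxx.eq_or_lt
  · exact h
  · exact hR.2.1 _ _ _ (hR.rel_chainEmb_of_lt i hlt) h

lemma monotone_rel_chainEmb (hR : IsProfile R) {i j : Fin 3} (hij : i ≠ j)
    (x : Fin (![d₁, d₂, d₃] i)) :
    Monotone fun y : Fin (![d₁, d₂, d₃] j) => R (chainEmb i x) (chainEmb j y) := by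
  intro y y' hyy h
  refine hR.2.2.2.2.2 _ _ _ ?_ ?_ ?_ h
  · rw [chainIdx_chainEmb, chainIdx_chainEmb]
    exact Fin.val_injective.ne hij
  · rw [chainIdx_chainEmb, chainIdx_chainEmb]
  · rw [chainHt_chainEmb, chainHt_chainEmb]
    exact hyy

lemma monotone_crossThreshold (hR : IsProfile R) (i j : Fin 3) :
    Monotone (crossThreshold R i j) :=
  threshold_antitone.comp (hR.antitone_rel_chainEmb i j)

theorem ext (hR : IsProfile R) (hR' : IsProfile R')
    (h : ∀ i j, i ≠ j → crossThreshold R i j = crossThreshold R' i j) : R = R' := by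
  funext u v
  obtain ⟨i, x, rfl⟩ := exists_chainEmb_eq u
  obtain ⟨j, y, rfl⟩ := exists_chainEmb_eq v
  apply propext
  by_cases hij : i = j
  · subst hij
    rw [hR.rel_chainEmb_iff, hR'.rel_chainEmb_iff]
  · rw [threshold_le_iff (hR.monotone_rel_chainEmb hij x),
      threshold_le_iff (hR'.monotone_rel_chainEmb hij x)]
    change (crossThreshold R i j x : ℕ) ≤ y ↔ (crossThreshold R' i j x : ℕ) ≤ y
    rw [h i j hij]

end IsProfile

lemma ncard_isProfile_le :
    {R : ProfileVertex d₁ d₂ d₃ → ProfileVertex d₁ d₂ d₃ → Prop | IsProfile R}.ncard ≤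
      ∏ p : {p : Fin 3 × Fin 3 // p.1 ≠ p.2},
        2 ^ (![d₁, d₂, d₃] p.1.1 + ![d₁, d₂, d₃] p.1.2) := by
  let code : {R // @IsProfile d₁ d₂ d₃ R} → ∀ p : {p : Fin 3 × Fin 3 // p.1 ≠ p.2},
      {f : Fin (![d₁, d₂, d₃] p.1.1) → Fin (![d₁, d₂, d₃] p.1.2 + 1) // Monotone f} :=
    fun R p => ⟨crossThreshold R.1 p.1.1 p.1.2, R.2.monotone_crossThreshold _ _⟩
  have hcode : Function.Injective code := fun R R' h => Subtype.ext <|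
    R.2.ext R'.2 fun i j hij => congrArg Subtype.val (congrFun h ⟨(i, j), hij⟩)
  calc _ = Nat.card {R // @IsProfile d₁ d₂ d₃ R} := (Nat.card_coe_set_eq _).symm
    _ ≤ _ := Nat.card_le_card_of_injective code hcode
    _ = _ := Nat.card_pi
    _ ≤ _ := prod_le_prod' fun p _ => card_monotone_fin_le

end Profile

/-- The number of transitive irreflexive relations on the disjoint union of
three chains of sizes `d₁, d₂, d₃ ≤ d` that extend the three chain orders and
are upward closed across chains is at most `2^(12d)`. -/
theorem stmt5 (d d₁ d₂ d₃ : ℕ) (h₁ : d₁ ≤ d) (h₂ : d₂ ≤ d) (h₃ : d₃ ≤ d) :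
    Set.ncard {R : ProfileVertex d₁ d₂ d₃ → ProfileVertex d₁ d₂ d₃ → Prop |
        (∀ x, ¬ R x x) ∧
        (∀ x y z, R x y → R y z → R x z) ∧
        (∀ x y : Fin d₁, x < y → R (.inl x) (.inl y)) ∧
        (∀ x y : Fin d₂, x < y → R (.inr (.inl x)) (.inr (.inl y))) ∧
        (∀ x y : Fin d₃, x < y → R (.inr (.inr x)) (.inr (.inr y))) ∧
        (∀ x y y', chainIdx x ≠ chainIdx y → chainIdx y = chainIdx y' →
          chainHt y ≤ chainHt y' → R x y → R x y')}
      ≤ 2 ^ (12 * d) := by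
  have hdims (i : Fin 3) : ![d₁, d₂, d₃] i ≤ d := by
    fin_cases i <;> assumption
  calc _ ≤ ∏ p : {p : Fin 3 × Fin 3 // p.1 ≠ p.2},
          2 ^ (![d₁, d₂, d₃] p.1.1 + ![d₁, d₂, d₃] p.1.2) := ncard_isProfile_le
    _ ≤ ∏ _p : {p : Fin 3 × Fin 3 // p.1 ≠ p.2}, 2 ^ (2 * d) :=
        prod_le_prod' fun p _ =>
          Nat.pow_le_pow_right two_pos (by linarith [hdims p.1.1, hdims p.1.2])
    _ = 2 ^ (12 * d) := by
      rw [prod_const, card_univ, show Fintype.card {p : Fin 3 × Fin 3 // p.1 ≠ p.2} = 6 from rfl,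
        ← pow_mul]
      ring_nf
end

section
/- If L₁ is a context-free language and L₂ is a regular language over the same alphabet, then L₁ ∩ L₂ is context-free. -/
/-!
Triple construction. The product grammar has nonterminals `(p, A, q)`, read as "`A` derives a word
driving `M` from `p` to `q`", and a fresh start symbol rewriting to `(M.start, S, f)` for accepting
`f`. Sentential forms of the product grammar are state-annotated sentential forms of `g`, and both
grammars rewrite them in lockstep: forwards, a step of the product grammar projects to a step of
`g` preserving the annotation; backwards, a step of `g` lifts against any annotation of its result.
Starting from the annotation of a word `w` by the run of `M` on it and lifting a derivation of `w`
backwards, the states at every split point are known in advance, so no guessing is needed.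
-/

namespace DFA

variable {T N σ : Type*} (M : DFA T σ)

/-- `u'` is `u` with every nonterminal `A` replaced by a triple `(p₁, A, p₂)`, the states threading a
run of `M` from `p` to `q` in which terminals advance by `M.step`. -/
inductive Annotates : σ → List (Symbol T (Option (σ × N × σ))) → List (Symbol T N) → σ → Prop
  | nil (p : σ) : Annotates p [] [] p
  | terminal {p q : σ} {u' u} (a : T) (h : Annotates (M.step p a) u' u q) :
      Annotates p (.terminal a :: u') (.terminal a :: u) q
  | nonterminal {p p' q : σ} {u' u} (A : N) (h : Annotates p' u' u q) :
      Annotates p (.nonterminal (some (p, A, p')) :: u') (.nonterminal A :: u) q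

variable {M}

theorem Annotates.append {p m q : σ} {x' y' : List (Symbol T (Option (σ × N × σ)))}
    {x y : List (Symbol T N)} (hx : M.Annotates p x' x m) (hy : M.Annotates m y' y q) :
    M.Annotates p (x' ++ y') (x ++ y) q := by
  induction hx with
  | nil => exact hy
  | terminal a _ ih => exact .terminal a (ih hy)
  | nonterminal A _ ih => exact .nonterminal A (ih hy)

theorem Annotates.split_annotation {p q : σ} {x' y' : List (Symbol T (Option (σ × N × σ)))}
    {u : List (Symbol T N)} (h : M.Annotates p (x' ++ y') u q) :
    ∃ x y m, u = x ++ y ∧ M.Annotates p x' x m ∧ M.Annotates m y' y q := by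
  induction x' generalizing p u with
  | nil => exact ⟨[], u, p, rfl, .nil p, h⟩
  | cons s x' ih =>
    cases h with
    | terminal a h =>
      obtain ⟨x, y, m, rfl, hx, hy⟩ := ih h
      exact ⟨_ :: x, y, m, rfl, .terminal a hx, hy⟩
    | nonterminal A h =>
      obtain ⟨x, y, m, rfl, hx, hy⟩ := ih h
      exact ⟨_ :: x, y, m, rfl, .nonterminal A hx, hy⟩

theorem Annotates.split_source {p q : σ} {u' : List (Symbol T (Option (σ × N × σ)))}
    {x y : List (Symbol T N)} (h : M.Annotates p u' (x ++ y) q) :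
    ∃ x' y' m, u' = x' ++ y' ∧ M.Annotates p x' x m ∧ M.Annotates m y' y q := by
  induction x generalizing p u' with
  | nil => exact ⟨[], u', p, rfl, .nil p, h⟩
  | cons s x ih =>
    cases h with
    | terminal a h =>
      obtain ⟨x', y', m, rfl, hx, hy⟩ := ih h
      exact ⟨_ :: x', y', m, rfl, .terminal a hx, hy⟩
    | nonterminal A h =>
      obtain ⟨x', y', m, rfl, hx, hy⟩ := ih h
      exact ⟨_ :: x', y', m, rfl, .nonterminal A hx, hy⟩

theorem annotates_map_terminal_iff {p q : σ} {w : List T} {u : List (Symbol T N)} :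
    M.Annotates p (w.map .terminal) u q ↔ u = w.map .terminal ∧ q = M.evalFrom p w := by
  induction w generalizing p u with
  | nil =>
    constructor
    · rintro ⟨⟩; exact ⟨rfl, rfl⟩
    · rintro ⟨rfl, rfl⟩; exact .nil _
  | cons a w ih =>
    constructor
    · rintro (_ | ⟨_, h⟩)
      obtain ⟨rfl, rfl⟩ := ih.mp h
      exact ⟨rfl, rfl⟩
    · rintro ⟨rfl, rfl⟩
      exact .terminal a (ih.mpr ⟨rfl, rfl⟩)

variable [Fintype σ]

open Classical in
noncomputable def annotations (M : DFA T σ) :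
    σ → List (Symbol T N) → Finset (List (Symbol T (Option (σ × N × σ))) × σ)
  | p, [] => {([], p)}
  | p, .terminal a :: u => (annotations M (M.step p a) u).image (Prod.map (.terminal a :: ·) id)
  | p, .nonterminal A :: u => Finset.univ.biUnion fun p' =>
      (annotations M p' u).image (Prod.map (.nonterminal (some (p, A, p')) :: ·) id)

theorem mem_annotations {p q : σ} {u' : List (Symbol T (Option (σ × N × σ)))}
    {u : List (Symbol T N)} : (u', q) ∈ M.annotations p u ↔ M.Annotates p u' u q := by
  induction u generalizing p u' with
  | nil =>
    simp only [annotations, Finset.mem_singleton, Prod.mk.injEq]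
    constructor
    · rintro ⟨rfl, rfl⟩; exact .nil _
    · rintro ⟨⟩; exact ⟨rfl, rfl⟩
  | cons s u ih =>
    cases s with
    | terminal a =>
      simp only [annotations, Finset.mem_image, Prod.exists, Prod.map, id, Prod.mk.injEq]
      constructor
      · rintro ⟨u', q, h, rfl, rfl⟩; exact .terminal a (ih.mp h)
      · rintro (_ | ⟨_, h⟩); exact ⟨_, _, ih.mpr h, rfl, rfl⟩
    | nonterminal A =>
      simp only [annotations, Finset.mem_biUnion, Finset.mem_univ, true_and, Finset.mem_image,
        Prod.exists, Prod.map, id, Prod.mk.injEq]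
      constructor
      · rintro ⟨p', u', q, h, rfl, rfl⟩; exact .nonterminal A (ih.mp h)
      · rintro (_ | _ | ⟨_, h⟩); exact ⟨_, _, _, ih.mpr h, rfl, rfl⟩


end DFA

namespace ContextFreeGrammar

variable {T : Type*} {σ : Type} [Fintype σ] (g : ContextFreeGrammar T) (M : DFA T σ)

open Classical in
noncomputable def prodDFA : ContextFreeGrammar T where
  NT := Option (σ × g.NT × σ)
  initial := none
  rules :=
    (Finset.univ.filter (· ∈ M.accept)).image
        (fun q => ⟨none, [.nonterminal (some (M.start, g.initial, q))]⟩) ∪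
      g.rules.biUnion fun r => Finset.univ.biUnion fun p =>
        (M.annotations p r.output).image fun x => ⟨some (p, r.input, x.2), x.1⟩

variable {g M}

theorem mem_prodDFA_rules {r' : ContextFreeRule T (Option (σ × g.NT × σ))} :
    r' ∈ (g.prodDFA M).rules ↔
      (∃ q ∈ M.accept, r' = ⟨none, [.nonterminal (some (M.start, g.initial, q))]⟩) ∨
      ∃ r ∈ g.rules, ∃ p o q, M.Annotates p o r.output q ∧ r' = ⟨some (p, r.input, q), o⟩ := by
  unfold prodDFA
  simp only [Finset.mem_union, Finset.mem_image, Finset.mem_filter, Finset.mem_univ,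
    true_and, Finset.mem_biUnion, Prod.exists, DFA.mem_annotations, eq_comm (b := r')]


variable {p q : σ} {u' v' : List (Symbol T (Option (σ × g.NT × σ)))} {u v : List (Symbol T g.NT)}

theorem prodDFA_produces_initial_iff :
    (g.prodDFA M).Produces [.nonterminal none] v' ↔
      ∃ q ∈ M.accept, v' = [.nonterminal (some (M.start, g.initial, q))] := by
  constructor
  · rintro ⟨r', hr', hrw⟩
    rcases mem_prodDFA_rules.mp hr' with ⟨q, hq, rfl⟩ | ⟨r, -, p, o, q, -, rfl⟩
    · rcases hrw with _ | ⟨_, ⟨⟩⟩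
      exact ⟨q, hq, rfl⟩
    · rcases hrw with _ | ⟨_, ⟨⟩⟩
  · rintro ⟨q, hq, rfl⟩
    exact ⟨_, mem_prodDFA_rules.mpr (.inl ⟨q, hq, rfl⟩), ContextFreeRule.Rewrites.input_output⟩

theorem exists_produces_of_prodDFA_produces (hp : (g.prodDFA M).Produces u' v')
    (hu : M.Annotates p u' u q) : ∃ v, M.Annotates p v' v q ∧ g.Produces u v := by
  obtain ⟨r', hr', hrw⟩ := hp
  obtain ⟨x', y', rfl, rfl⟩ := hrw.exists_parts
  obtain ⟨xz, y, m₂, rfl, hxz, hy⟩ := hu.split_annotation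
  obtain ⟨x, z, m₁, rfl, hx, hz⟩ := hxz.split_annotation
  rcases mem_prodDFA_rules.mp hr' with ⟨f, -, rfl⟩ | ⟨r, hr, a, o, b, ho, rfl⟩
  · cases hz
  · rcases hz with _ | _ | ⟨_, ⟨⟩⟩
    exact ⟨x ++ r.output ++ y, (hx.append ho).append hy, r, hr, r.rewrites_of_exists_parts x y⟩

theorem exists_derives_of_prodDFA_derives (hd : (g.prodDFA M).Derives u' v')
    (hu : M.Annotates p u' u q) : ∃ v, M.Annotates p v' v q ∧ g.Derives u v := by
  induction hd with
  | refl => exact ⟨u, hu, .refl u⟩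
  | tail _ hp ih =>
    obtain ⟨v, hv, huv⟩ := ih
    obtain ⟨w, hw, hvw⟩ := exists_produces_of_prodDFA_produces hp hv
    exact ⟨w, hw, huv.trans_produces hvw⟩

theorem exists_prodDFA_produces_of_produces (hp : g.Produces u v) (hv : M.Annotates p v' v q) :
    ∃ u', M.Annotates p u' u q ∧ (g.prodDFA M).Produces u' v' := by
  obtain ⟨r, hr, hrw⟩ := hp
  obtain ⟨x, y, rfl, rfl⟩ := hrw.exists_parts
  obtain ⟨xo', y', m₂, rfl, hxo, hy⟩ := hv.split_source
  obtain ⟨x', o, m₁, rfl, hx, ho⟩ := hxo.split_source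
  exact ⟨x' ++ [.nonterminal (some (m₁, r.input, m₂))] ++ y',
    (hx.append (.nonterminal _ (.nil _))).append hy, _,
    mem_prodDFA_rules.mpr (.inr ⟨r, hr, m₁, o, m₂, ho, rfl⟩),
    ContextFreeRule.rewrites_of_exists_parts _ x' y'⟩

theorem exists_prodDFA_derives_of_derives (hd : g.Derives u v) (hv : M.Annotates p v' v q) :
    ∃ u', M.Annotates p u' u q ∧ (g.prodDFA M).Derives u' v' := by
  induction hd using Relation.ReflTransGen.head_induction_on with
  | refl => exact ⟨v', hv, Relation.ReflTransGen.refl⟩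
  | head hp _ ih =>
    obtain ⟨w', hw, hwv⟩ := ih
    obtain ⟨u', hu, huw⟩ := exists_prodDFA_produces_of_produces hp hw
    exact ⟨u', hu, huw.trans_derives hwv⟩

theorem language_prodDFA : (g.prodDFA M).language = g.language ⊓ M.accepts := by
  ext w
  simp only [mem_language_iff, Language.mem_inf, DFA.mem_accepts]
  constructor
  · intro h
    obtain h_eq | ⟨v', hv', hv'w⟩ := h.eq_or_head
    · cases w <;> simp at h_eq
    obtain ⟨q, hq, rfl⟩ := prodDFA_produces_initial_iff.mp hv'
    obtain ⟨u, hu, hgu⟩ := exists_derives_of_prodDFA_derives hv'w (.nonterminal _ (.nil q))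
    obtain ⟨rfl, rfl⟩ := DFA.annotates_map_terminal_iff.mp hu
    exact ⟨hgu, hq⟩
  · rintro ⟨hg, hM⟩
    obtain ⟨u', hu', hd⟩ := exists_prodDFA_derives_of_derives (M := M) (p := M.start) hg
      (DFA.annotates_map_terminal_iff.mpr ⟨rfl, rfl⟩)
    rcases hu' with _ | _ | ⟨_, ⟨⟩⟩
    exact (prodDFA_produces_initial_iff.mpr ⟨_, hM, rfl⟩).trans_derives hd

end ContextFreeGrammar

/-- The intersection of a context-free language with a regular language is
context-free. -/
theorem stmt8 {α : Type} (L₁ L₂ : Language α)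
    (h₁ : L₁.IsContextFree) (h₂ : L₂.IsRegular) :
    (L₁ ⊓ L₂ : Language α).IsContextFree := by
  obtain ⟨g, rfl⟩ := h₁
  obtain ⟨σ, _, M, rfl⟩ := h₂
  exact ⟨g.prodDFA M, ContextFreeGrammar.language_prodDFA⟩
end

section
/- The sisterhood-checking automaton is correct: a word w of length n over alphabet {e₁,…,e_n} encoding an involutive fixed-point-free pairing E of positions {1,…,n} is accepted by the automaton A₂ if and only if E respects sisterhood, i.e., whenever positions i and i′ are paired by E and (i,j), (i′,j′) are sister-bracket pairs, then j and j′ are paired by E. -/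
/-- One step of the sisterhood-checking automaton `A₂`, processing position `i`
of the code of the pairing `E`.  The state is `some ξ` (current stack `ξ`) or
`none` (failure).  At position `i` the automaton reads the letter `e_{E i}`:
if `i` is not a bracket it moves on; if `i` is a bracket but `E i` is not, it
fails; if `i` is an opening sister bracket (`i < s i`) it pushes `e_{s (E i)}`;
if `i` is a closing sister bracket it pops the stack and compares the popped
letter with `e_{E i}`, failing on mismatch. -/
def step (n : ℕ) (isB : Fin n → Bool) (s E : Fin n → Fin n)
    (st : Option (List (Fin n))) (i : Fin n) : Option (List (Fin n)) :=
  match st with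
  | none => none
  | some ξ =>
    if isB i then
      if isB (E i) then
        if (i : ℕ) < (s i : ℕ) then some (s (E i) :: ξ)
        else
          match ξ with
          | [] => none
          | t :: ξ' => if t = E i then some ξ' else none
      else none
    else some ξ

/-- The automaton accepts iff, after processing all `n` letters starting from
the empty stack, it ends with an empty stack without failing. -/
def accepts (n : ℕ) (isB : Fin n → Bool) (s E : Fin n → Fin n) : Prop :=
  (List.finRange n).foldl (step n isB s E) (some []) = some []

/-!
While reading the code of `E`, the automaton keeps one stack entry for every sister pair
`j < s j` opened but not yet closed, innermost on top, and that entry is the letter `s (E j)`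
which the closing bracket `s j` must carry if `E` respects sisterhood. By well-nestedness the
bracket `s i` closed at position `i > s i` is the innermost open one, so the pop at `i` compares
`s (E (s i))` with `E i`, i.e. it checks sisterhood at `i`. Hence the run survives exactly as
long as sisterhood holds, and after the last position no bracket is open, so the stack is empty.
-/

namespace SisterAutomaton

variable {n : ℕ} {isB : Fin n → Bool} {s E : Fin n → Fin n}

def WellNested (isB : Fin n → Bool) (s : Fin n → Fin n) : Prop :=
  ∀ i j, isB i = true → isB j = true →
    (i : ℕ) < (s i : ℕ) → (j : ℕ) < (s j : ℕ) → (i : ℕ) < (j : ℕ) →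
    (j : ℕ) < (s i : ℕ) → (s j : ℕ) < (s i : ℕ)

/-- The sister pair `j < s j` is open after the first `k` positions have been read. -/
def IsOpenAt (isB : Fin n → Bool) (s : Fin n → Fin n) (k : ℕ) (j : Fin n) : Prop :=
  isB j = true ∧ (j : ℕ) < s j ∧ (j : ℕ) < k ∧ k ≤ s j

def IsStackAt (isB : Fin n → Bool) (s E : Fin n → Fin n) (k : ℕ) (ξ : List (Fin n)) : Prop :=
  ∃ L : List (Fin n), L.Pairwise (fun a b : Fin n => (b : ℕ) < a) ∧
    (∀ j, j ∈ L ↔ IsOpenAt isB s k j) ∧ ξ = L.map (fun j => s (E j))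

def SisterRespectedAt (isB : Fin n → Bool) (s E : Fin n → Fin n) (i : Fin n) : Prop :=
  isB i = true → (s i : ℕ) < i → E (s i) = s (E i)

theorem eq_sister_iff (hsinv : ∀ i, isB i = true → s (s i) = i) {a b : Fin n}
    (ha : isB a = true) (hb : isB b = true) : a = s b ↔ s a = b := by
  constructor
  · rintro rfl
    exact hsinv b hb
  · rintro rfl
    exact (hsinv a ha).symm

theorem forall_sisterRespectedAt_iff (hEB : ∀ i, isB i = true → isB (E i) = true)
    (hsB : ∀ i, isB i = true → isB (s i) = true) (hsinv : ∀ i, isB i = true → s (s i) = i)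
    (hsfp : ∀ i, isB i = true → s i ≠ i) :
    (∀ i, SisterRespectedAt isB s E i) ↔ ∀ i, isB i = true → E (s i) = s (E i) := by
  refine ⟨fun h i hi => ?_, fun h i hi _ => h i hi⟩
  rcases lt_or_gt_of_ne (Fin.val_ne_of_ne (hsfp i hi)) with hlt | hgt
  · exact h i hi hlt
  · have hsi := hsB i hi
    have := h (s i) hsi (by rwa [hsinv i hi])
    rw [hsinv i hi, eq_comm] at this
    exact (eq_sister_iff hsinv (hEB _ hsi) (hEB i hi)).mpr this

theorem isOpenAt_succ_iff {i j : Fin n} :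
    IsOpenAt isB s (i + 1) j ↔
      (IsOpenAt isB s i j ∧ s j ≠ i) ∨ (j = i ∧ isB i = true ∧ (i : ℕ) < s i) := by
  by_cases hji : j = i
  · subst hji
    simp only [IsOpenAt, true_and]
    constructor
    · rintro ⟨hb, hlt, -, -⟩
      exact Or.inr ⟨hb, hlt⟩
    · rintro (⟨⟨-, -, h, -⟩, -⟩ | ⟨hb, hlt⟩)
      · omega
      · exact ⟨hb, hlt, by omega, hlt⟩
  · have hval : (j : ℕ) ≠ i := Fin.val_ne_of_ne hji
    simp only [IsOpenAt, hji, false_and, or_false, ne_eq, Fin.ext_iff]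
    constructor
    · rintro ⟨hb, hlt, hj, hs⟩
      exact ⟨⟨hb, hlt, by omega, by omega⟩, by omega⟩
    · rintro ⟨⟨hb, hlt, hj, hs⟩, hne⟩
      exact ⟨hb, hlt, by omega, by omega⟩

theorem IsStackAt.succ_of_not_bracket (hsB : ∀ i, isB i = true → isB (s i) = true)
    {i : Fin n} {ξ : List (Fin n)} (h : IsStackAt isB s E i ξ) (hi : isB i = false) :
    IsStackAt isB s E (i + 1) ξ := by
  obtain ⟨L, hsort, hmem, rfl⟩ := h
  refine ⟨L, hsort, fun j => ?_, rfl⟩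
  have hsj : IsOpenAt isB s i j → s j ≠ i := by
    rintro ⟨hj, -⟩ rfl
    simp [hsB j hj] at hi
  rw [hmem, isOpenAt_succ_iff]
  simp only [hi, Bool.false_eq_true, false_and, and_false, or_false]
  exact ⟨fun hj => ⟨hj, hsj hj⟩, And.left⟩

theorem IsStackAt.cons_of_opening (hsinv : ∀ i, isB i = true → s (s i) = i)
    {i : Fin n} {ξ : List (Fin n)} (h : IsStackAt isB s E i ξ) (hi : isB i = true)
    (hlt : (i : ℕ) < s i) : IsStackAt isB s E (i + 1) (s (E i) :: ξ) := by
  obtain ⟨L, hsort, hmem, rfl⟩ := h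
  refine ⟨i :: L, List.pairwise_cons.mpr ⟨fun b hb => ((hmem b).mp hb).2.2.1, hsort⟩,
    fun j => ?_, rfl⟩
  have hsj : IsOpenAt isB s i j → s j ≠ i := by
    rintro ⟨hj, -, hji, -⟩ hsji
    have : j = s i := by rw [← hsji, hsinv j hj]
    rw [this] at hji
    omega
  rw [List.mem_cons, hmem, isOpenAt_succ_iff]
  constructor
  · rintro (rfl | hj)
    · exact Or.inr ⟨rfl, hi, hlt⟩
    · exact Or.inl ⟨hj, hsj hj⟩
  · rintro (⟨hj, -⟩ | ⟨rfl, -⟩)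
    · exact Or.inr hj
    · exact Or.inl rfl

/-- Well-nestedness makes the pair closed at `i` the innermost open one. -/
theorem IsStackAt.eq_cons_of_closing (hsB : ∀ i, isB i = true → isB (s i) = true)
    (hsinv : ∀ i, isB i = true → s (s i) = i) (hwn : WellNested isB s)
    {i : Fin n} {ξ : List (Fin n)} (h : IsStackAt isB s E i ξ) (hi : isB i = true)
    (hlt : (s i : ℕ) < i) :
    ∃ ξ', ξ = s (E (s i)) :: ξ' ∧ IsStackAt isB s E (i + 1) ξ' := by
  obtain ⟨L, hsort, hmem, rfl⟩ := h
  have hssi := hsinv i hi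
  have hopen : IsOpenAt isB s i (s i) := ⟨hsB i hi, by rwa [hssi], hlt, by rw [hssi]⟩
  obtain _ | ⟨a, L'⟩ := L
  · exact absurd ((hmem _).mpr hopen) List.not_mem_nil
  obtain ⟨hbelow, hsort'⟩ := List.pairwise_cons.mp hsort
  have ha : a = s i := by
    by_contra hne
    have hsiL' : s i ∈ L' := (List.mem_cons.mp ((hmem _).mpr hopen)).resolve_left (Ne.symm hne)
    obtain ⟨haB, has, hai, hia⟩ := (hmem a).mp List.mem_cons_self
    have := hwn (s i) a (hsB i hi) haB (by rwa [hssi]) has (hbelow _ hsiL') (by rwa [hssi])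
    rw [hssi] at this
    omega
  subst ha
  refine ⟨_, rfl, L', hsort', fun j => ?_, rfl⟩
  rw [isOpenAt_succ_iff]
  have hnotnew : ¬ (j = i ∧ isB i = true ∧ (i : ℕ) < s i) := fun h => by omega
  simp only [hnotnew, or_false, ← hmem]
  constructor
  · intro hj
    refine ⟨List.mem_cons_of_mem _ hj, fun hsji => ?_⟩
    have := hbelow j hj
    rw [← hsji, hsinv j ((hmem j).mp (List.mem_cons_of_mem _ hj)).1] at this
    omega
  · rintro ⟨hj, hsji⟩
    refine (List.mem_cons.mp hj).resolve_left fun hjsi => hsji ?_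
    rw [hjsi, hssi]

theorem IsStackAt.exists_step (hEB : ∀ i, isB i = true → isB (E i) = true)
    (hsB : ∀ i, isB i = true → isB (s i) = true) (hsinv : ∀ i, isB i = true → s (s i) = i)
    (hsfp : ∀ i, isB i = true → s i ≠ i) (hwn : WellNested isB s)
    {i : Fin n} {ξ : List (Fin n)} (h : IsStackAt isB s E i ξ) :
    ∃ ξ', IsStackAt isB s E (i + 1) ξ' ∧
      (SisterRespectedAt isB s E i → step n isB s E (some ξ) i = some ξ') ∧
      (¬ SisterRespectedAt isB s E i → step n isB s E (some ξ) i = none) := by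
  cases hi : isB i
  · refine ⟨ξ, h.succ_of_not_bracket hsB hi, fun _ => by simp [step, hi], fun hR => ?_⟩
    exact (hR fun h => by simp [hi] at h).elim
  rcases lt_or_gt_of_ne (Fin.val_ne_of_ne (hsfp i hi)) with hlt | hgt
  · obtain ⟨ξ', rfl, hξ'⟩ := h.eq_cons_of_closing hsB hsinv hwn hi hlt
    have hR : SisterRespectedAt isB s E i ↔ s (E (s i)) = E i :=
      have hsister := eq_sister_iff hsinv (hEB _ (hsB i hi)) (hEB i hi)
      ⟨fun hR => hsister.mp (hR hi hlt), fun h _ _ => hsister.mpr h⟩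
    have hnot : ¬ (i : ℕ) < s i := by omega
    refine ⟨ξ', hξ', fun hR' => ?_, fun hR' => ?_⟩
    · simp [step, hi, hEB i hi, hnot, hR.mp hR']
    · simp [step, hi, hEB i hi, hnot, hR.not.mp hR']
  · refine ⟨_, h.cons_of_opening hsinv hi hgt, fun _ => by simp [step, hi, hEB i hi, hgt],
      fun hR => (hR fun _ h => absurd h (by omega)).elim⟩

def run (isB : Fin n → Bool) (s E : Fin n → Fin n) (k : ℕ) : Option (List (Fin n)) :=
  ((List.finRange n).take k).foldl (step n isB s E) (some [])

theorem run_succ {k : ℕ} (hk : k < n) :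
    run isB s E (k + 1) = step n isB s E (run isB s E k) ⟨k, hk⟩ := by
  rw [run, List.take_add_one, List.foldl_append, List.getElem?_eq_getElem (by simpa using hk)]
  simp [run]

theorem accepts_iff_run : accepts n isB s E ↔ run isB s E n = some [] := by
  rw [accepts, run, List.take_of_length_le (List.length_finRange).le]

theorem IsStackAt.eq_nil {ξ : List (Fin n)} (h : IsStackAt isB s E n ξ) : ξ = [] := by
  obtain ⟨L, -, hmem, rfl⟩ := h
  suffices L = [] by rw [this, List.map_nil]
  refine List.eq_nil_iff_forall_not_mem.mpr fun j hj => ?_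
  have := ((hmem j).mp hj).2.2.2
  omega

theorem exists_run_eq_some (hEB : ∀ i, isB i = true → isB (E i) = true)
    (hsB : ∀ i, isB i = true → isB (s i) = true) (hsinv : ∀ i, isB i = true → s (s i) = i)
    (hsfp : ∀ i, isB i = true → s i ≠ i) (hwn : WellNested isB s)
    {k : ℕ} (hk : k ≤ n)
    (hR : ∀ i : Fin n, (i : ℕ) < k → SisterRespectedAt isB s E i) :
    ∃ ξ, run isB s E k = some ξ ∧ IsStackAt isB s E k ξ := by
  induction k with
  | zero => exact ⟨[], rfl, [], .nil, fun j => by simp [IsOpenAt], rfl⟩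
  | succ k ih =>
    obtain ⟨ξ, hrun, hξ⟩ := ih (by omega) fun i hi => hR i (by omega)
    obtain ⟨ξ', hξ', hsome, -⟩ := hξ.exists_step (i := ⟨k, hk⟩) hEB hsB hsinv hsfp hwn
    exact ⟨ξ', by rw [run_succ hk, hrun, hsome (hR _ (Nat.lt_succ_self k))], hξ'⟩

theorem sisterRespectedAt_of_run_ne_none (hEB : ∀ i, isB i = true → isB (E i) = true)
    (hsB : ∀ i, isB i = true → isB (s i) = true) (hsinv : ∀ i, isB i = true → s (s i) = i)
    (hsfp : ∀ i, isB i = true → s i ≠ i) (hwn : WellNested isB s)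
    {k : ℕ} (hk : k ≤ n) (h : run isB s E k ≠ none) :
    ∀ i : Fin n, (i : ℕ) < k → SisterRespectedAt isB s E i := by
  induction k with
  | zero => exact fun i hi => absurd hi (Nat.not_lt_zero _)
  | succ k ih =>
    rw [run_succ hk] at h
    have hR := ih (by omega) fun h0 => h (by rw [h0]; rfl)
    obtain ⟨ξ, hrun, hξ⟩ := exists_run_eq_some hEB hsB hsinv hsfp hwn (by omega) hR
    obtain ⟨-, -, -, hnone⟩ := hξ.exists_step (i := ⟨k, hk⟩) hEB hsB hsinv hsfp hwn
    intro i hi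
    rcases Nat.lt_succ_iff_lt_or_eq.mp hi with hi | hi
    · exact hR i hi
    · obtain rfl : i = ⟨k, hk⟩ := Fin.ext hi
      by_contra hc
      exact h (by rw [hrun]; exact hnone hc)

end SisterAutomaton

open SisterAutomaton

theorem stmt10_general (n : ℕ) (isB : Fin n → Bool) (s E : Fin n → Fin n)
    (hEB : ∀ i, isB i = true → isB (E i) = true)
    (hsB : ∀ i, isB i = true → isB (s i) = true)
    (hsinv : ∀ i, isB i = true → s (s i) = i)
    (hsfp : ∀ i, isB i = true → s i ≠ i)
    (hwn : ∀ i j, isB i = true → isB j = true →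
      (i : ℕ) < (s i : ℕ) → (j : ℕ) < (s j : ℕ) → (i : ℕ) < (j : ℕ) →
      (j : ℕ) < (s i : ℕ) → (s j : ℕ) < (s i : ℕ)) :
    accepts n isB s E ↔ ∀ i, isB i = true → E (s i) = s (E i) := by
  rw [accepts_iff_run, ← forall_sisterRespectedAt_iff hEB hsB hsinv hsfp]
  constructor
  · intro hacc i
    exact sisterRespectedAt_of_run_ne_none hEB hsB hsinv hsfp hwn le_rfl (by simp [hacc]) i i.isLt
  · intro hR
    obtain ⟨ξ, hrun, hξ⟩ := exists_run_eq_some hEB hsB hsinv hsfp hwn le_rfl fun i _ => hR i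
    rw [hrun, hξ.eq_nil]

/-- Correctness of the sisterhood-checking automaton: for a fixed-point-free
involutive pairing `E` mapping brackets to brackets, whose code is read by the
automaton, acceptance holds iff `E` respects sisterhood, i.e. `E` maps sister
brackets to sister brackets: `E (s i) = s (E i)` for every bracket `i`. -/
theorem stmt10 (n : ℕ) (isB : Fin n → Bool) (s E : Fin n → Fin n)
    (hEinv : ∀ i, E (E i) = i) (hEfp : ∀ i, E i ≠ i)
    (hEB : ∀ i, isB i = true → isB (E i) = true)
    (hsB : ∀ i, isB i = true → isB (s i) = true)
    (hsinv : ∀ i, isB i = true → s (s i) = i)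
    (hsfp : ∀ i, isB i = true → s i ≠ i)
    (hwn : ∀ i j, isB i = true → isB j = true →
      (i : ℕ) < (s i : ℕ) → (j : ℕ) < (s j : ℕ) → (i : ℕ) < (j : ℕ) →
      (j : ℕ) < (s i : ℕ) → (s j : ℕ) < (s i : ℕ)) :
    accepts n isB s E ↔ ∀ i, isB i = true → E (s i) = s (E i) :=
  stmt10_general n isB s E hEB hsB hsinv hsfp hwn
end
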